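/- arXiv:1005.3895 — 7 statements merged into one kernel-verified Lean document; each statement's English description precedes it below -/
import Mathlib

section
/- Let n ∈ ℕ, let Δ : MvPolynomial (Fin n) ℝ → MvPolynomial (Fin n) ℝ be the polynomial Laplacian Δp = ∑_{i} ∂ᵢ(∂ᵢ p) (with ∂ᵢ the formal partial derivative pderiv i), and let t > 0 be a real number. Then for every polynomial p ∈ MvPolynomial (Fin n) ℝ, the (finite) sum ∑_{k≥0} (t^k / k!) · (Δ^k p)(0) equals (4πt)^{-n/2} · ∫_{x ∈ EuclideanSpace ℝ (Fin n)} exp(−‖x‖²/(4t)) · p(x) dx, where the integral is with respect to Lebesgue measure and converges absolutely. -/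
open MvPolynomial MeasureTheory Real Finset
open scoped Nat

/-!
Both sides are linear in `p`, so it suffices to take `p = x^α`. The Gaussian weight factors over
the coordinates, so the integral is `(4πt)^(n/2) ∏ᵢ μ_{2t}(αᵢ)`, where `μ_s(m) = s^(m/2) (m-1)‼`
(zero for odd `m`) is the `m`-th moment of the centred normal law of variance `s`; the
one-dimensional moments come from the Gamma function at half-integers. On the other side,
`Δ x^α = ∑ᵢ αᵢ(αᵢ-1) x^(α-2eᵢ)`, and the moment recursion `s m(m-1) μ_s(m-2) = m μ_s(m)` gives,
by induction on `k`, `(Δ^k x^α)(0) = k! ∏ᵢ μ₂(αᵢ)` if `|α| = 2k` and `0` otherwise. So only the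
term `k = |α|/2` of the heat series survives, and `t^k ∏ᵢ μ₂(αᵢ) = ∏ᵢ μ_{2t}(αᵢ)`.
-/

noncomputable def gaussianMoment (s : ℝ) (m : ℕ) : ℝ :=
  if Even m then s ^ (m / 2) * (m - 1 : ℕ)‼ else 0

lemma gaussianMoment_of_odd {s : ℝ} {m : ℕ} (hm : Odd m) : gaussianMoment s m = 0 :=
  if_neg (Nat.not_even_iff_odd.mpr hm)

lemma gaussianMoment_two_mul (s : ℝ) (r : ℕ) :
    gaussianMoment s (2 * r) = s ^ r * (2 * r - 1 : ℕ)‼ := by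
  rw [gaussianMoment, if_pos (even_two_mul r), Nat.mul_div_cancel_left r two_pos]

lemma mul_gaussianMoment_eq (s : ℝ) (m : ℕ) :
    s * (m * (m - 1) : ℕ) * gaussianMoment s (m - 2) = m * gaussianMoment s m := by
  obtain ⟨r, rfl | rfl⟩ := m.even_or_odd'
  · rcases r with _ | r
    · simp
    · rw [show 2 * (r + 1) - 2 = 2 * r by omega, gaussianMoment_two_mul, gaussianMoment_two_mul,
        show 2 * (r + 1) - 1 = 2 * r + 1 by omega, Nat.doubleFactorial_add_one]
      push_cast
      ring
  · rw [gaussianMoment_of_odd (odd_two_mul_add_one r)]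
    rcases r with _ | r
    · simp
    · rw [show 2 * (r + 1) + 1 - 2 = 2 * r + 1 by omega,
        gaussianMoment_of_odd (odd_two_mul_add_one r)]
      ring

lemma prod_gaussianMoment_mul {ι : Type*} [Fintype ι] (s a : ℝ) {α : ι → ℕ} {k : ℕ}
    (hα : ∑ i, α i = 2 * k) :
    ∏ i, gaussianMoment (s * a) (α i) = a ^ k * ∏ i, gaussianMoment s (α i) := by
  by_cases hev : ∀ i, Even (α i)
  · have hk : ∑ i, α i / 2 = k := by
      have : ∑ i, α i = 2 * ∑ i, α i / 2 := by
        rw [mul_sum]; exact sum_congr rfl fun i _ => (Nat.two_mul_div_two_of_even (hev i)).symm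
      omega
    simp only [gaussianMoment, hev, if_true, mul_pow, mul_assoc, prod_mul_distrib,
      prod_pow_eq_pow_sum, hk]
    ring
  · push Not at hev
    obtain ⟨i, hi⟩ := hev
    rw [prod_eq_zero (mem_univ i) (if_neg hi), prod_eq_zero (mem_univ i) (if_neg hi), mul_zero]

lemma even_sum_of_prod_gaussianMoment_ne_zero {ι : Type*} [Fintype ι] {s : ℝ} {α : ι → ℕ}
    (h : ∏ i, gaussianMoment s (α i) ≠ 0) : Even (∑ i, α i) :=
  even_sum _ fun i _ => by
    by_contra hi
    exact h (prod_eq_zero (mem_univ i) (if_neg hi))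

variable {t : ℝ}

lemma integrable_pow_mul_exp_neg_sq_div (ht : 0 < t) (m : ℕ) :
    Integrable fun x : ℝ => x ^ m * exp (-x ^ 2 / (4 * t)) := by
  have := integrable_rpow_mul_exp_neg_mul_sq (b := (4 * t)⁻¹) (by positivity)
    (neg_one_lt_zero.trans_le m.cast_nonneg)
  simpa only [rpow_natCast, neg_mul, ← div_eq_inv_mul, neg_div] using this

lemma integral_pow_mul_exp_neg_sq_div_of_odd {m : ℕ} (hm : Odd m) :
    ∫ x : ℝ, x ^ m * exp (-x ^ 2 / (4 * t)) = 0 := by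
  have h := integral_neg_eq_self (fun x : ℝ => x ^ m * exp (-x ^ 2 / (4 * t))) volume
  simp only [hm.neg_pow, neg_sq, neg_mul, integral_neg] at h
  linarith

lemma integral_pow_two_mul_mul_exp_neg_sq_div (ht : 0 < t) (r : ℕ) :
    ∫ x : ℝ, x ^ (2 * r) * exp (-x ^ 2 / (4 * t)) =
      √(4 * π * t) * ((2 * t) ^ r * (2 * r - 1 : ℕ)‼) := by
  have h4t : 0 < 4 * t := by positivity
  have habs : (fun x : ℝ => x ^ (2 * r) * exp (-x ^ 2 / (4 * t)))
      = fun x => |x| ^ (2 * r) * exp (-|x| ^ 2 / (4 * t)) := by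
    simp only [(even_two_mul r).pow_abs, sq_abs]
  have hIoi : ∫ x in Set.Ioi (0 : ℝ), x ^ (2 * r) * exp (-x ^ 2 / (4 * t))
      = ∫ x in Set.Ioi (0 : ℝ), x ^ ((2 * r : ℕ) : ℝ) * exp (-(4 * t)⁻¹ * x ^ (2 : ℝ)) := by
    refine setIntegral_congr_fun measurableSet_Ioi fun x _ => ?_
    rw [rpow_natCast, rpow_two, neg_mul, ← div_eq_inv_mul, neg_div]
  rw [habs, integral_comp_abs (f := fun x : ℝ => x ^ (2 * r) * exp (-x ^ 2 / (4 * t))), hIoi,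
    integral_rpow_mul_exp_neg_mul_rpow two_pos (by norm_cast; omega) (by positivity)]
  have hexp : -(((2 * r : ℕ) : ℝ) + 1) / 2 = -((r : ℝ) + 1 / 2) := by push_cast; ring
  have hΓ : (((2 * r : ℕ) : ℝ) + 1) / 2 = (r : ℝ) + 1 / 2 := by push_cast; ring
  rw [hexp, hΓ, Gamma_nat_add_half, inv_rpow h4t.le, ← rpow_neg h4t.le, neg_neg,
    rpow_add h4t, rpow_natCast, ← sqrt_eq_rpow, show 4 * π * t = 4 * t * π by ring,
    sqrt_mul h4t.le, mul_pow, mul_pow, show (4 : ℝ) = 2 * 2 by norm_num, mul_pow]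
  field_simp

lemma integral_pow_mul_exp_neg_sq_div (ht : 0 < t) (m : ℕ) :
    ∫ x : ℝ, x ^ m * exp (-x ^ 2 / (4 * t)) = √(4 * π * t) * gaussianMoment (2 * t) m := by
  rcases m.even_or_odd with ⟨r, rfl⟩ | hm
  · rw [← two_mul, integral_pow_two_mul_mul_exp_neg_sq_div ht, gaussianMoment_two_mul]
  · rw [integral_pow_mul_exp_neg_sq_div_of_odd hm, gaussianMoment_of_odd hm, mul_zero]

namespace EuclideanSpace

variable {ι : Type*} [Fintype ι]

lemma integrable_fintype_prod {f : ι → ℝ → ℝ} (hf : ∀ i, Integrable (f i)) :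
    Integrable fun x : EuclideanSpace ℝ ι => ∏ i, f i (x i) := by
  rw [← (PiLp.volume_preserving_toLp ι).integrable_comp_emb
    (MeasurableEquiv.toLp 2 _).measurableEmbedding]
  exact Integrable.fintype_prod hf

lemma integral_fintype_prod_eq_prod (f : ι → ℝ → ℝ) :
    ∫ x : EuclideanSpace ℝ ι, ∏ i, f i (x i) = ∏ i, ∫ x, f i x := by
  rw [← (PiLp.volume_preserving_toLp ι).integral_comp
    (MeasurableEquiv.toLp 2 _).measurableEmbedding]
  exact integral_fintype_prod_volume_eq_prod f

end EuclideanSpace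

section Monomial

variable {ι : Type*} [Fintype ι]

lemma exp_neg_norm_sq_div_mul_eval_monomial (x : EuclideanSpace ℝ ι) (α : ι →₀ ℕ) (c : ℝ) :
    exp (-‖x‖ ^ 2 / (4 * t)) * eval (fun i => x i) (monomial α c) =
      c * ∏ i, x i ^ α i * exp (-x i ^ 2 / (4 * t)) := by
  rw [eval_monomial, Finsupp.prod_pow, prod_mul_distrib, ← exp_sum, EuclideanSpace.norm_sq_eq]
  simp only [norm_eq_abs, sq_abs, ← sum_div, ← sum_neg_distrib]
  ring

lemma integrable_exp_neg_norm_sq_div_mul_eval_monomial (ht : 0 < t) (α : ι →₀ ℕ) (c : ℝ) :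
    Integrable fun x : EuclideanSpace ℝ ι =>
      exp (-‖x‖ ^ 2 / (4 * t)) * eval (fun i => x i) (monomial α c) := by
  simp only [exp_neg_norm_sq_div_mul_eval_monomial]
  exact (EuclideanSpace.integrable_fintype_prod fun i =>
    integrable_pow_mul_exp_neg_sq_div ht (α i)).const_mul c

lemma integral_exp_neg_norm_sq_div_mul_eval_monomial (ht : 0 < t) (α : ι →₀ ℕ) (c : ℝ) :
    ∫ x : EuclideanSpace ℝ ι, exp (-‖x‖ ^ 2 / (4 * t)) * eval (fun i => x i) (monomial α c) =
      (4 * π * t) ^ (Fintype.card ι / 2 : ℝ) * (c * ∏ i, gaussianMoment (2 * t) (α i)) := by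
  simp_rw [exp_neg_norm_sq_div_mul_eval_monomial]
  rw [integral_const_mul,
    EuclideanSpace.integral_fintype_prod_eq_prod (fun i x => x ^ α i * exp (-x ^ 2 / (4 * t)))]
  simp only [integral_pow_mul_exp_neg_sq_div ht, prod_mul_distrib, prod_const, card_univ]
  rw [sqrt_eq_rpow, ← rpow_natCast, ← rpow_mul (by positivity)]
  ring_nf

end Monomial

lemma Finsupp.coe_tsub_single {σ : Type*} [DecidableEq σ] (α : σ →₀ ℕ) (i : σ) (m : ℕ) :
    ⇑(α - Finsupp.single i m) = Function.update α i (α i - m) := by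
  ext j
  rcases eq_or_ne j i with rfl | hj
  · simp
  · simp [hj]

namespace MvPolynomial

variable {σ R : Type*} [Fintype σ] [CommSemiring R]

noncomputable def laplacian : MvPolynomial σ R →ₗ[R] MvPolynomial σ R :=
  ∑ i, (pderiv i).toLinearMap ∘ₗ (pderiv i).toLinearMap

lemma laplacian_apply (p : MvPolynomial σ R) : laplacian p = ∑ i, pderiv i (pderiv i p) := by
  simp [laplacian]

lemma laplacian_monomial (α : σ →₀ ℕ) (c : R) :
    laplacian (monomial α c) =
      ∑ i, monomial (α - Finsupp.single i 2) (c * (α i * (α i - 1) : ℕ)) := by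
  classical
  refine (laplacian_apply _).trans (sum_congr rfl fun i _ => ?_)
  rw [pderiv_monomial, pderiv_monomial, tsub_tsub, ← Finsupp.single_add, Finsupp.tsub_apply,
    Finsupp.single_eq_same, mul_assoc, Nat.cast_mul]

end MvPolynomial

variable {σ : Type*} [Fintype σ]

lemma eval_zero_laplacian_pow_monomial (k : ℕ) (α : σ →₀ ℕ) (c : ℝ) :
    eval 0 ((laplacian ^ k) (monomial α c)) =
      if ∑ i, α i = 2 * k then c * k ! * ∏ i, gaussianMoment 2 (α i) else 0 := by
  classical
  induction k generalizing α c with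
  | zero =>
    simp only [pow_zero, Module.End.one_apply, eval_zero, constantCoeff_monomial, mul_zero,
      ← Finsupp.degree_eq_sum, Finsupp.degree_eq_zero_iff]
    split_ifs with h
    · simp [h, gaussianMoment]
    · rfl
  | succ k ih =>
    have hterm : ∀ i, eval 0 ((laplacian ^ k)
        (monomial (α - Finsupp.single i 2) (c * (α i * (α i - 1) : ℕ)))) =
        if ∑ i, α i = 2 * (k + 1) then c * k ! * ((α i / 2 : ℝ) * ∏ j, gaussianMoment 2 (α j))
        else 0 := by
      intro i
      have hrec := mul_gaussianMoment_eq 2 (α i)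
      rw [ih, Finsupp.coe_tsub_single, sum_update_of_mem (mem_univ i)]
      simp_rw [Function.apply_update (fun _ => gaussianMoment 2)]
      rw [prod_update_of_mem (mem_univ i), prod_eq_mul_prod_sdiff_singleton_of_mem (mem_univ i),
        sum_eq_add_sum_sdiff_singleton_of_mem (mem_univ i)]
      rcases lt_or_ge (α i) 2 with hlt | hge
      · have h0 : α i * (α i - 1) = 0 := by interval_cases α i <;> rfl
        simp only [h0, Nat.cast_zero, mul_zero, zero_mul, ite_self] at hrec ⊢
        split_ifs
        · linear_combination (c * k ! / 2 * ∏ j ∈ univ \ {i}, gaussianMoment 2 (α j)) * hrec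
        · rfl
      · refine if_congr (by omega) ?_ rfl
        linear_combination (c * k ! / 2 * ∏ j ∈ univ \ {i}, gaussianMoment 2 (α j)) * hrec
    rw [pow_succ, Module.End.mul_apply, laplacian_monomial, map_sum, map_sum]
    simp only [hterm]
    rw [sum_ite_irrel, sum_const_zero]
    split_ifs with h
    · have hsum : ∑ i, (α i : ℝ) = 2 * (k + 1) := by exact_mod_cast h
      rw [← mul_sum, ← sum_mul, ← sum_div, hsum, Nat.factorial_succ]
      push_cast
      ring
    · rfl

lemma hasSum_heat_monomial (α : σ →₀ ℕ) (c : ℝ) :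
    HasSum (fun k => t ^ k / k ! * eval 0 ((laplacian ^ k) (monomial α c)))
      (c * ∏ i, gaussianMoment (2 * t) (α i)) := by
  simp only [eval_zero_laplacian_pow_monomial]
  by_cases hev : Even (∑ i, α i)
  · obtain ⟨K, hK⟩ := hev
    rw [prod_gaussianMoment_mul 2 t (k := K) (by omega)]
    convert hasSum_single K fun k hk => ?_ using 1
    · rw [if_pos (by omega)]
      field_simp
    · rw [if_neg (by omega), mul_zero]
  · have h0 : ∏ i, gaussianMoment (2 * t) (α i) = 0 :=
      by_contra fun h => hev (even_sum_of_prod_gaussianMoment_ne_zero h)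
    rw [h0, mul_zero]
    convert hasSum_zero with k
    rw [if_neg fun h => hev ⟨k, by omega⟩, mul_zero]

theorem integrable_and_hasSum_heat (ht : 0 < t) (p : MvPolynomial σ ℝ) :
    Integrable (fun x : EuclideanSpace ℝ σ => exp (-‖x‖ ^ 2 / (4 * t)) * eval (fun i => x i) p) ∧
    HasSum (fun k => t ^ k / k ! * eval 0 ((laplacian ^ k) p))
      ((4 * π * t) ^ (-(Fintype.card σ : ℝ) / 2) *
        ∫ x : EuclideanSpace ℝ σ, exp (-‖x‖ ^ 2 / (4 * t)) * eval (fun i => x i) p) := by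
  induction p using MvPolynomial.induction_on' with
  | monomial α c =>
    refine ⟨integrable_exp_neg_norm_sq_div_mul_eval_monomial ht α c, ?_⟩
    rw [integral_exp_neg_norm_sq_div_mul_eval_monomial ht, ← mul_assoc,
      ← rpow_add (by positivity), neg_div, neg_add_cancel, rpow_zero, one_mul]
    exact hasSum_heat_monomial α c
  | add p q hp hq =>
    simp only [map_add, mul_add]
    rw [integral_add hp.1 hq.1, mul_add]
    exact ⟨hp.1.add hq.1, hp.2.add hq.2⟩

/-- The heat operator `exp(tΔ)` evaluated at the origin, applied to a polynomial `p`,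
equals the Gaussian integral `(4πt)^{-n/2} ∫ exp(-‖x‖²/(4t)) p(x) dx`, and the
integrand is Lebesgue integrable. -/
theorem heat_operator_eq_gaussian_integral
    (n : ℕ) (Δ : MvPolynomial (Fin n) ℝ → MvPolynomial (Fin n) ℝ)
    (hΔ : ∀ q : MvPolynomial (Fin n) ℝ, Δ q = ∑ i : Fin n, pderiv i (pderiv i q))
    (t : ℝ) (ht : 0 < t) (p : MvPolynomial (Fin n) ℝ) :
    Integrable (fun x : EuclideanSpace ℝ (Fin n) =>
      Real.exp (-‖x‖ ^ 2 / (4 * t)) * eval (fun i => x i) p) ∧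
    ∑' k : ℕ, (t ^ k / (Nat.factorial k : ℝ)) * eval (0 : Fin n → ℝ) (Δ^[k] p)
      = (4 * Real.pi * t) ^ (-(n : ℝ) / 2) *
        ∫ x : EuclideanSpace ℝ (Fin n),
          Real.exp (-‖x‖ ^ 2 / (4 * t)) * eval (fun i => x i) p := by
  have hΔ' : Δ = ⇑(laplacian : MvPolynomial (Fin n) ℝ →ₗ[ℝ] _) := by
    ext1 q
    rw [hΔ, laplacian_apply]
  obtain ⟨hint, hsum⟩ := integrable_and_hasSum_heat ht p
  simp only [Module.End.pow_apply, Fintype.card_fin, ← hΔ'] at hsum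
  exact ⟨hint, hsum.tsum_eq⟩
end

section
/- Let n ∈ ℕ and let Δ : MvPolynomial (Fin n) ℝ → MvPolynomial (Fin n) ℝ be the polynomial Laplacian Δp = ∑_{i} ∂ᵢ(∂ᵢ p). For every vector β = (β₁,…,βₙ) ∈ ℝⁿ and every d ∈ ℕ, the polynomial Δ^d((β₁X₁ + ⋯ + βₙXₙ)^{2d}) is the constant polynomial (2d)! · (β₁² + ⋯ + βₙ²)^d. -/
open MvPolynomial

/-- The `d`-th power of the polynomial Laplacian applied to the `2d`-th power of the
linear form `⟨β, x⟩` is the constant `(2d)! · |β|^{2d}`... more precisely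
`(2d)! · (∑ i, βᵢ²)^d`. -/
theorem laplacian_pow_linear_form_pow
    (n : ℕ) (Δ : MvPolynomial (Fin n) ℝ → MvPolynomial (Fin n) ℝ)
    (hΔ : ∀ q : MvPolynomial (Fin n) ℝ, Δ q = ∑ i : Fin n, pderiv i (pderiv i q))
    (β : Fin n → ℝ) (d : ℕ) :
    Δ^[d] ((∑ i : Fin n, C (β i) * X i) ^ (2 * d))
      = C ((Nat.factorial (2 * d) : ℝ) * (∑ i : Fin n, (β i) ^ 2) ^ d) := by
  set L : MvPolynomial (Fin n) ℝ := ∑ i : Fin n, C (β i) * X i with hLdef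
  have hL : ∀ i : Fin n, pderiv i L = C (β i) := by
    intro i
    rw [hLdef, map_sum]
    simp only [pderiv_C_mul, pderiv_X]
    rw [Finset.sum_eq_single i]
    · simp
    · intro j _ hj; simp [Pi.single_apply, hj.symm]
    · simp
  have key : ∀ m : ℕ, Δ (L ^ (m + 2))
      = C (((m + 2 : ℕ) : ℝ) * ((m + 1 : ℕ) : ℝ) * (∑ i : Fin n, (β i) ^ 2)) * L ^ m := by
    intro m
    rw [hΔ]
    have : ∀ i : Fin n, pderiv i (pderiv i (L ^ (m + 2)))
        = C (((m + 2 : ℕ) : ℝ) * ((m + 1 : ℕ) : ℝ) * (β i) ^ 2) * L ^ m := by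
      intro i
      rw [pderiv_pow, hL, show m + 2 - 1 = m + 1 from rfl]
      simp only [pderiv_mul, pderiv_C, Derivation.map_natCast, pderiv_pow, hL,
        show m + 1 - 1 = m from rfl, mul_zero, add_zero, zero_mul, zero_add]
      simp only [map_mul, map_pow, map_natCast]
      push_cast
      ring
    simp only [this]
    rw [← Finset.sum_mul]
    congr 1
    rw [← map_sum, Finset.mul_sum]
  have hCmul : ∀ (k : ℕ) (a : ℝ) (p : MvPolynomial (Fin n) ℝ),
      Δ^[k] (C a * p) = C a * Δ^[k] p := by
    intro k
    induction k with
    | zero => simp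
    | succ k ih =>
      intro a p
      rw [Function.iterate_succ_apply, Function.iterate_succ_apply]
      rw [hΔ (C a * p)]
      simp only [pderiv_C_mul]
      rw [← Finset.mul_sum, ← hΔ, ih]
  induction d with
  | zero => simp
  | succ d ih =>
    rw [Function.iterate_succ_apply]
    have h2 : 2 * (d + 1) = 2 * d + 2 := by ring
    rw [h2, key (2 * d), hCmul, ih, ← map_mul]
    congr 1
    rw [show 2 * d + 2 = (2 * d + 1) + 1 from rfl, Nat.factorial_succ, Nat.factorial_succ]
    push_cast
    ring
end

section
/- In the polynomial ring ℝ[H,E,F] (i.e. MvPolynomial (Fin 3) ℝ with variables named H, E, F), define the sl₂ Laplacian Δ_g := 2(∂_H∘∂_H + ∂_E∘∂_F) (with ∂ the formal partial derivative pderiv) and the Casimir polynomial C := (1/2)·H² + 2·E·F. Then for every d ≥ 1, Δ_g(C^d) = 2d(2d+1) · C^{d−1}. -/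
open MvPolynomial

/-- For the sl₂ Laplacian `Δ_g = 2(∂_H² + ∂_E ∂_F)` on `ℝ[H,E,F]` and the Casimir
polynomial `C = H²/2 + 2EF`, one has `Δ_g(C^d) = 2d(2d+1) C^{d-1}` for `d ≥ 1`.
Here the variables `H, E, F` are `X 0, X 1, X 2` of `MvPolynomial (Fin 3) ℝ`. -/
theorem sl2_laplacian_casimir_pow
    (Δg : MvPolynomial (Fin 3) ℝ → MvPolynomial (Fin 3) ℝ)
    (hΔg : ∀ q : MvPolynomial (Fin 3) ℝ,
      Δg q = 2 * (pderiv 0 (pderiv 0 q) + pderiv 1 (pderiv 2 q)))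
    (Cas : MvPolynomial (Fin 3) ℝ)
    (hCas : Cas = C (1 / 2 : ℝ) * X 0 ^ 2 + C (2 : ℝ) * X 1 * X 2)
    (d : ℕ) (hd : 1 ≤ d) :
    Δg (Cas ^ d) = C ((2 * d * (2 * d + 1) : ℕ) : ℝ) * Cas ^ (d - 1) := by
  have hb : (C (2:ℝ) : MvPolynomial (Fin 3) ℝ) = 2 := map_ofNat _ 2
  have ha : (2 : MvPolynomial (Fin 3) ℝ) * C (1/2 : ℝ) = 1 := by
    rw [← hb, ← map_mul]; norm_num
  obtain ⟨n, rfl⟩ := Nat.exists_eq_add_of_le hd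
  subst hCas
  rw [hΔg]
  simp only [pderiv_pow, pderiv_mul, map_add, pderiv_X_self, pderiv_C, map_zero, map_one,
    Derivation.map_natCast, Derivation.map_one_eq_zero, Nat.add_sub_cancel_left,
    pderiv_X_of_ne (by decide : (0:Fin 3) ≠ 1), pderiv_X_of_ne (by decide : (0:Fin 3) ≠ 2),
    pderiv_X_of_ne (by decide : (1:Fin 3) ≠ 0), pderiv_X_of_ne (by decide : (1:Fin 3) ≠ 2),
    pderiv_X_of_ne (by decide : (2:Fin 3) ≠ 0), pderiv_X_of_ne (by decide : (2:Fin 3) ≠ 1)]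
  simp only [hb, map_natCast]
  rcases n with _ | m
  · push_cast
    linear_combination (2 : MvPolynomial (Fin 3) ℝ) * ha
  · simp only [Nat.add_sub_cancel]
    push_cast
    linear_combination ((C (1/2 : ℝ) * X 0 ^ 2 + 2 * X 1 * X 2) ^ m *
      (C (1/2 : ℝ) * X 0 ^ 2 * (4 * (m : MvPolynomial (Fin 3) ℝ) ^ 2 + 14 * m + 12) +
        X 1 * X 2 * (4 * (m : MvPolynomial (Fin 3) ℝ) + 8))) * ha
end

section
/- In the polynomial ring ℝ[H,E,F] (i.e. MvPolynomial (Fin 3) ℝ with variables named H, E, F), define the sl₂ Laplacian Δ_g := 2(∂_H∘∂_H + ∂_E∘∂_F) and the Casimir polynomial C := (1/2)·H² + 2·E·F. Then for every d ∈ ℕ, Δ_g^d(C^d) is the constant polynomial (2d+1)!. -/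
open MvPolynomial

/-- For the sl₂ Laplacian `Δ_g = 2(∂_H² + ∂_E ∂_F)` on `ℝ[H,E,F]` and the Casimir
polynomial `C = H²/2 + 2EF`, the `d`-th iterate satisfies `Δ_g^d(C^d) = (2d+1)!`.
Here the variables `H, E, F` are `X 0, X 1, X 2` of `MvPolynomial (Fin 3) ℝ`. -/
theorem sl2_laplacian_pow_casimir_pow
    (Δg : MvPolynomial (Fin 3) ℝ → MvPolynomial (Fin 3) ℝ)
    (hΔg : ∀ q : MvPolynomial (Fin 3) ℝ,
      Δg q = 2 * (pderiv 0 (pderiv 0 q) + pderiv 1 (pderiv 2 q)))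
    (Cas : MvPolynomial (Fin 3) ℝ)
    (hCas : Cas = C (1 / 2 : ℝ) * X 0 ^ 2 + C (2 : ℝ) * X 1 * X 2)
    (d : ℕ) :
    Δg^[d] (Cas ^ d) = C ((Nat.factorial (2 * d + 1) : ℕ) : ℝ) := by
  -- constants
  have hC2 : (C (2:ℝ) : MvPolynomial (Fin 3) ℝ) = 2 := by
    exact_mod_cast C_eq_coe_nat (σ := Fin 3) (R := ℝ) 2
  have h2 : (C ((1:ℝ)/2) : MvPolynomial (Fin 3) ℝ) * 2 = 1 := by
    rw [← hC2, ← C_mul]; norm_num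
  have h2i : (C ((2:ℝ)⁻¹) : MvPolynomial (Fin 3) ℝ) * 2 = 1 := by
    rw [show ((2:ℝ)⁻¹) = 1/2 by norm_num]; exact h2
  -- first derivatives of Cas
  have hd0 : pderiv 0 Cas = X 0 := by
    subst hCas; simp [pderiv_mul, pderiv_pow, pderiv_C_mul]
    linear_combination (X 0) * h2i
  have hd1 : pderiv 1 Cas = C (2:ℝ) * X 2 := by
    subst hCas; simp [pderiv_mul, pderiv_pow, pderiv_C_mul]; ring
  have hd2 : pderiv 2 Cas = C (2:ℝ) * X 1 := by
    subst hCas; simp [pderiv_mul, pderiv_pow, pderiv_C_mul]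
  have h2Cas : (2:MvPolynomial (Fin 3) ℝ) * Cas = X 0^2 + 4 * X 1 * X 2 := by
    linear_combination (2:MvPolynomial (Fin 3) ℝ)*hCas + (X 0^2)*h2 + (2*X 1*X 2)*hC2
  -- Δg is additive and commutes with ℕ-scalars
  have hadd : ∀ p q, Δg (p + q) = Δg p + Δg q := by
    intro p q; simp [hΔg, map_add]; ring
  have hzero : Δg 0 = 0 := by simp [hΔg]
  have hsmul : ∀ (n : ℕ) p, Δg (n • p) = n • Δg p := by
    intro n p
    induction n with
    | zero => simp [hzero]
    | succ n ih => rw [succ_nsmul, succ_nsmul, hadd, ih]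
  have hitsmul : ∀ (m n : ℕ) p, Δg^[m] (n • p) = n • Δg^[m] p := by
    intro m
    induction m with
    | zero => simp
    | succ m ih =>
      intro n p
      rw [Function.iterate_succ_apply, hsmul, ih, Function.iterate_succ_apply]
  -- key computation
  have key : ∀ k : ℕ, Δg (Cas ^ (k+1)) = (2*(k+1)*(2*k+3)) • Cas ^ k := by
    intro k
    have hst : (k : MvPolynomial (Fin 3) ℝ) * (Cas ^ (k-1) * Cas) = k * Cas ^ k := by
      cases k with
      | zero => simp
      | succ n => rw [Nat.add_sub_cancel, ← pow_succ]
    have e1 : pderiv (0 : Fin 3) (Cas ^ (k+1)) = (k+1) • (Cas ^ k * X 0) := by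
      rw [(pderiv (0:Fin 3)).leibniz_pow, hd0, Nat.add_sub_cancel, smul_eq_mul]
    have e1' : pderiv (0 : Fin 3) (Cas ^ k) = k • (Cas ^ (k-1) * X 0) := by
      rw [(pderiv (0:Fin 3)).leibniz_pow, hd0, smul_eq_mul]
    have e2 : pderiv (2 : Fin 3) (Cas ^ (k+1)) = (k+1) • (Cas ^ k * (C (2:ℝ) * X 1)) := by
      rw [(pderiv (2:Fin 3)).leibniz_pow, hd2, Nat.add_sub_cancel, smul_eq_mul]
    have e2' : pderiv (1 : Fin 3) (Cas ^ k) = k • (Cas ^ (k-1) * (C (2:ℝ) * X 2)) := by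
      rw [(pderiv (1:Fin 3)).leibniz_pow, hd1, smul_eq_mul]
    rw [hΔg, e1, e2, map_nsmul, map_nsmul]
    rw [show pderiv (0:Fin 3) (Cas ^ k * X 0)
        = pderiv 0 (Cas ^ k) * X 0 + Cas ^ k * 1 from by rw [pderiv_mul, pderiv_X_self]]
    rw [show pderiv (1:Fin 3) (Cas ^ k * (C (2:ℝ) * X 1))
        = pderiv 1 (Cas ^ k) * (C (2:ℝ) * X 1) + Cas ^ k * (C (2:ℝ) * 1) from by
      rw [pderiv_mul, pderiv_C_mul, pderiv_X_self]]
    rw [e1', e2', hC2]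
    simp only [nsmul_eq_mul]
    push_cast
    linear_combination (4*((k:MvPolynomial (Fin 3) ℝ)+1)) * hst
      - (2*((k:MvPolynomial (Fin 3) ℝ)+1)*(k:MvPolynomial (Fin 3) ℝ)*Cas^(k-1)) * h2Cas
  -- main induction
  induction d with
  | zero => simp
  | succ d ih =>
    rw [Function.iterate_succ_apply, key d, hitsmul, ih, nsmul_eq_mul,
      ← C_eq_coe_nat, ← C_mul]
    congr 1
    have hnat : 2*(d+1)*(2*d+3) * Nat.factorial (2*d+1) = Nat.factorial (2*(d+1)+1) := by
      rw [show 2*(d+1)+1 = (2*d+1)+1+1 from by ring]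
      rw [show ((2*d+1)+1+1).factorial = ((2*d+1)+1+1)*(((2*d+1)+1)*(2*d+1).factorial) from rfl]
      ring
    exact_mod_cast congrArg (Nat.cast : ℕ → ℝ) hnat
end

section
/- In ℝ[H,E,F] (MvPolynomial (Fin 3) ℝ), define Δ_g := 2(∂_H∘∂_H + ∂_E∘∂_F) and C := (1/2)·H² + 2·E·F. Let P : ℝ[H,E,F] → ℝ[X] be the algebra homomorphism sending H ↦ X, E ↦ 0, F ↦ 0 (restriction to the Cartan subalgebra), and let Δ_h : ℝ[X] → ℝ[X] be Δ_h(q) := 2·q'' (twice the second formal derivative). Then for every d ∈ ℕ: X · P(Δ_g(C^d)) = Δ_h(X · P(C^d)). -/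
open MvPolynomial

/-- Harish-Chandra restriction formula for sl₂: with `Δ_g = 2(∂_H² + ∂_E ∂_F)` on
`ℝ[H,E,F]`, the Casimir `C = H²/2 + 2EF`, the restriction map `P : ℝ[H,E,F] → ℝ[X]`
(`H ↦ X`, `E ↦ 0`, `F ↦ 0`) and `Δ_h q = 2 q''`, one has
`X · P(Δ_g(C^d)) = Δ_h(X · P(C^d))` for all `d`. -/
theorem sl2_harish_chandra_restriction
    (Δg : MvPolynomial (Fin 3) ℝ → MvPolynomial (Fin 3) ℝ)
    (hΔg : ∀ q : MvPolynomial (Fin 3) ℝ,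
      Δg q = 2 * (pderiv 0 (pderiv 0 q) + pderiv 1 (pderiv 2 q)))
    (Cas : MvPolynomial (Fin 3) ℝ)
    (hCas : Cas = C (1 / 2 : ℝ) * X 0 ^ 2 + C (2 : ℝ) * X 1 * X 2)
    (P : MvPolynomial (Fin 3) ℝ →ₐ[ℝ] Polynomial ℝ)
    (hP : P = aeval ![Polynomial.X, 0, 0])
    (Δh : Polynomial ℝ → Polynomial ℝ)
    (hΔh : ∀ q : Polynomial ℝ, Δh q = 2 * Polynomial.derivative (Polynomial.derivative q))
    (d : ℕ) :
    Polynomial.X * P (Δg (Cas ^ d)) = Δh (Polynomial.X * P (Cas ^ d)) := by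
  have h0 : pderiv (0:Fin 3) Cas = X 0 := by
    have h : (2 : MvPolynomial (Fin 3) ℝ) = C 2 := (map_ofNat C 2).symm
    simp [hCas, pderiv_mul, pderiv_X_self, pderiv_X_of_ne, h]
    rw [← mul_assoc, ← C_mul]; norm_num
  have h1 : pderiv (1:Fin 3) Cas = C 2 * X 2 := by
    simp [hCas, pderiv_mul, pderiv_X_self, pderiv_X_of_ne, mul_comm]
  have h2 : pderiv (2:Fin 3) Cas = C 2 * X 1 := by
    simp [hCas, pderiv_mul, pderiv_X_self, pderiv_X_of_ne]
  have hPC : P Cas = Polynomial.C (1/2 : ℝ) * Polynomial.X ^ 2 := by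
    simp [hCas, hP, algebraMap_eq]
  have hPX0 : P (X 0) = Polynomial.X := by simp [hP]
  have hPX1 : P (X 1) = 0 := by simp [hP]
  have hPX2 : P (X 2) = 0 := by simp [hP]
  have hc : ∀ a : ℝ, P (C a) = Polynomial.C a := by intro a; simp [hP, algebraMap_eq]
  have hv : ∀ n : ℕ, (Polynomial.C (1/2:ℝ) * Polynomial.X ^ 2) ^ n
      = Polynomial.C ((1/2:ℝ)^n) * Polynomial.X ^ (2*n) := by
    intro n; rw [mul_pow, ← Polynomial.C_pow, pow_mul]
  rw [hΔg, hΔh]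
  match d with
  | 0 => simp
  | 1 =>
    rw [pow_one Cas, h0, h2, pderiv_X_self, pderiv_C_mul, pderiv_X_self]
    simp only [map_mul, map_add, map_one, map_ofNat, mul_one, hPC, hc]
    apply Polynomial.funext; intro x
    simp [Polynomial.derivative_mul, Polynomial.derivative_pow]
    ring
  | (k+2) =>
    rw [pderiv_pow, h0, pderiv_pow, h2]
    simp only [show k+2-1 = k+1 from rfl]
    simp only [pderiv_mul, pderiv_pow, h0, h1, Derivation.map_natCast, pderiv_X_self,
      pderiv_C_mul, pderiv_C, show k+1-1 = k from rfl, mul_one, mul_zero, zero_mul,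
      add_zero, zero_add]
    simp only [map_mul, map_add, map_pow, map_natCast, map_ofNat, hPC, hPX0, hPX1, hPX2, hc,
      mul_zero, zero_mul, add_zero, zero_add]
    rw [hv (k+2)]
    rw [show Polynomial.X * (Polynomial.C ((1/2:ℝ)^(k+2)) * Polynomial.X ^ (2*(k+2)))
        = Polynomial.C ((1/2:ℝ)^(k+2)) * Polynomial.X ^ (2*k+5) by rw [show 2*(k+2) = 2*k+4 by ring]; ring]
    rw [Polynomial.derivative_C_mul, Polynomial.derivative_X_pow,
      show 2*k+5-1 = 2*k+4 by omega]
    simp only [Polynomial.derivative_C_mul, Polynomial.derivative_mul,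
      Polynomial.derivative_natCast, Polynomial.derivative_X_pow, Polynomial.derivative_C,
      Polynomial.derivative_ofNat, zero_mul, zero_add,
      show 2*k+4-1 = 2*k+3 by omega]
    apply Polynomial.funext; intro x
    simp only [Polynomial.eval_mul, Polynomial.eval_add, Polynomial.eval_pow,
      Polynomial.eval_C, Polynomial.eval_X, Polynomial.eval_natCast, Polynomial.eval_ofNat]
    push_cast
    ring
end

section
/- In ℝ[H,E,F] (MvPolynomial (Fin 3) ℝ), define Δ_g := 2(∂_H∘∂_H + ∂_E∘∂_F) and C := (1/2)·H² + 2·E·F. Let P : ℝ[H,E,F] → ℝ[X] be the algebra homomorphism sending H ↦ X, E ↦ 0, F ↦ 0, and let Δ_h(q) := 2·q''. Then for every d ∈ ℕ, the identity 4·(d+1)!·Δ_g^d(C^d) = d!·Δ_h^{d+1}(X² · P(C^d)) holds; both sides equal the constant 4·(d+1)!·(2d+1)!. -/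
open MvPolynomial

noncomputable def Cas0 : MvPolynomial (Fin 3) ℝ :=
  C (1 / 2 : ℝ) * X 0 ^ 2 + C (2 : ℝ) * X 1 * X 2

lemma c2eq : (C (2:ℝ) : MvPolynomial (Fin 3) ℝ) = 2 := map_ofNat _ 2

lemma hhalf : (C (1/2 : ℝ) : MvPolynomial (Fin 3) ℝ) * 2 = 1 := by
  rw [← c2eq, ← C_mul]; norm_num

lemma pd0' : pderiv (R := ℝ) 0 Cas0 = X 0 := by
  simp only [Cas0, map_add, pderiv_mul, pderiv_C, pderiv_X_self, pderiv_pow,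
    pderiv_X_of_ne (by decide : (1:Fin 3) ≠ 0), pderiv_X_of_ne (by decide : (2:Fin 3) ≠ 0)]
  push_cast
  linear_combination X 0 * hhalf

lemma pd1' : pderiv (R := ℝ) 1 Cas0 = C (2:ℝ) * X 2 := by
  simp only [Cas0, map_add, pderiv_mul, pderiv_C, pderiv_X_self, pderiv_pow,
    pderiv_X_of_ne (by decide : (0:Fin 3) ≠ 1), pderiv_X_of_ne (by decide : (2:Fin 3) ≠ 1)]
  ring

lemma pd2' : pderiv (R := ℝ) 2 Cas0 = C (2:ℝ) * X 1 := by
  simp only [Cas0, map_add, pderiv_mul, pderiv_C, pderiv_X_self, pderiv_pow,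
    pderiv_X_of_ne (by decide : (0:Fin 3) ≠ 2), pderiv_X_of_ne (by decide : (1:Fin 3) ≠ 2)]
  ring

lemma key' : (X 0 : MvPolynomial (Fin 3) ℝ) ^ 2 + 4 * X 1 * X 2 = 2 * Cas0 := by
  have h2 : ((2:MvPolynomial (Fin 3) ℝ) * C 2) = 4 := by
    rw [← c2eq, ← C_mul, show (2:ℝ)*2 = 4 by norm_num]; exact map_ofNat _ 4
  rw [Cas0]
  linear_combination (- X 0 ^ 2) * hhalf - (X 1 * X 2) * h2

lemma hp (m : ℕ) (i : Fin 3) :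
    pderiv (R := ℝ) i (Cas0 ^ (m+1)) = ((m+1 : ℕ) : MvPolynomial (Fin 3) ℝ) * Cas0 ^ m * pderiv i Cas0 := by
  rw [pderiv_pow]; simp

lemma pdnat (i : Fin 3) (k : ℕ) (q : MvPolynomial (Fin 3) ℝ) :
    pderiv (R := ℝ) i ((k : MvPolynomial (Fin 3) ℝ) * q) = (k : MvPolynomial (Fin 3) ℝ) * pderiv i q := by
  rw [← nsmul_eq_mul, map_nsmul, nsmul_eq_mul]

lemma lemA (n : ℕ) :
    pderiv (R := ℝ) 0 (pderiv 0 (Cas0 ^ (n+1))) + pderiv 1 (pderiv 2 (Cas0 ^ (n+1)))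
      = (((n+1)*(2*n+3) : ℕ) : MvPolynomial (Fin 3) ℝ) * Cas0 ^ n := by
  cases n with
  | zero =>
    rw [pow_one, pd0', pd2', pderiv_X_self, pderiv_C_mul, pderiv_X_self, c2eq]
    push_cast
    ring
  | succ m =>
    rw [hp (m+1) 0, hp (m+1) 2, pd0', pd2', mul_assoc, mul_assoc, pdnat, pdnat,
      pderiv_mul, pderiv_mul, hp m 0, hp m 1, pd0', pd1', pderiv_X_self,
      pderiv_C_mul, pderiv_X_self, c2eq]
    push_cast
    linear_combination ((m:MvPolynomial (Fin 3) ℝ)+2) * ((m:MvPolynomial (Fin 3) ℝ)+1) * Cas0 ^ m * key'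

lemma hB (Δh : Polynomial ℝ → Polynomial ℝ)
    (hΔh : ∀ q : Polynomial ℝ, Δh q = 2 * Polynomial.derivative (Polynomial.derivative q)) :
    ∀ (k : ℕ) (c : ℝ), Δh^[k] (Polynomial.C c * Polynomial.X ^ (2*k))
      = Polynomial.C (2^k * (2*k).factorial * c) := by
  intro k
  induction k with
  | zero => intro c; simp
  | succ k ih =>
    intro c
    rw [Function.iterate_succ_apply, hΔh]
    have hstep : (2 : Polynomial ℝ) * Polynomial.derivative (Polynomial.derivative (Polynomial.C c * Polynomial.X ^ (2*(k+1))))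
        = Polynomial.C (2*(2*k+2)*(2*k+1)*c) * Polynomial.X ^ (2*k) := by
      rw [show 2*(k+1) = (2*k+1)+1 by ring]
      simp only [Polynomial.derivative_C_mul, Polynomial.derivative_X_pow, Nat.add_sub_cancel]
      rw [show (2:Polynomial ℝ) = Polynomial.C 2 from (map_ofNat _ 2).symm]
      simp only [← mul_assoc, ← Polynomial.C_mul]
      congr 1
      push_cast
      ring
    rw [hstep, ih]
    congr 1
    have h2 : (2*(k+1)).factorial = (2*k+2) * ((2*k+1) * (2*k).factorial) := by
      rw [show 2*(k+1) = (2*k+1)+1 by ring, Nat.factorial_succ, Nat.factorial_succ]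
    rw [h2]
    push_cast
    ring

/-- The sl₂ instance of Proposition `prop.DhD`: with `Δ_g = 2(∂_H² + ∂_E ∂_F)` on
`ℝ[H,E,F]`, the Casimir `C = H²/2 + 2EF`, the restriction map `P : ℝ[H,E,F] → ℝ[X]`
(`H ↦ X`, `E ↦ 0`, `F ↦ 0`) and `Δ_h q = 2 q''`, both `4·(d+1)!·Δ_g^d(C^d)` and
`d!·Δ_h^{d+1}(X²·P(C^d))` equal the constant `4·(d+1)!·(2d+1)!`. -/
theorem sl2_DhD_identity
    (Δg : MvPolynomial (Fin 3) ℝ → MvPolynomial (Fin 3) ℝ)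
    (hΔg : ∀ q : MvPolynomial (Fin 3) ℝ,
      Δg q = 2 * (pderiv 0 (pderiv 0 q) + pderiv 1 (pderiv 2 q)))
    (Cas : MvPolynomial (Fin 3) ℝ)
    (hCas : Cas = C (1 / 2 : ℝ) * X 0 ^ 2 + C (2 : ℝ) * X 1 * X 2)
    (P : MvPolynomial (Fin 3) ℝ →ₐ[ℝ] Polynomial ℝ)
    (hP : P = aeval ![Polynomial.X, 0, 0])
    (Δh : Polynomial ℝ → Polynomial ℝ)
    (hΔh : ∀ q : Polynomial ℝ, Δh q = 2 * Polynomial.derivative (Polynomial.derivative q))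
    (d : ℕ) :
    C ((4 * Nat.factorial (d + 1) : ℕ) : ℝ) * Δg^[d] (Cas ^ d)
        = C ((4 * Nat.factorial (d + 1) * Nat.factorial (2 * d + 1) : ℕ) : ℝ) ∧
    Polynomial.C ((Nat.factorial d : ℕ) : ℝ) * Δh^[d + 1] (Polynomial.X ^ 2 * P (Cas ^ d))
        = Polynomial.C ((4 * Nat.factorial (d + 1) * Nat.factorial (2 * d + 1) : ℕ) : ℝ) := by
  have hCas0 : Cas = Cas0 := by rw [hCas, Cas0]
  have hconst : ∀ (k : ℕ) (a : ℕ) (q : MvPolynomial (Fin 3) ℝ),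
      Δg^[k] ((a : MvPolynomial (Fin 3) ℝ) * q) = (a : MvPolynomial (Fin 3) ℝ) * Δg^[k] q := by
    intro k
    induction k with
    | zero => intro a q; simp
    | succ k ih =>
      intro a q
      have h1 : Δg ((a : MvPolynomial (Fin 3) ℝ) * q) = (a : MvPolynomial (Fin 3) ℝ) * Δg q := by
        rw [hΔg, hΔg q, pdnat, pdnat, pdnat, pdnat]; ring
      rw [Function.iterate_succ_apply, Function.iterate_succ_apply, h1, ih]
  have hiter : ∀ n : ℕ, Δg^[n] (Cas0 ^ n) = (((2*n+1).factorial : ℕ) : MvPolynomial (Fin 3) ℝ) := by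
    intro n
    induction n with
    | zero => simp
    | succ n ih =>
      have hfac : (2*n+3).factorial = (2*n+3)*((2*n+2)*(2*n+1).factorial) := by
        rw [show 2*n+3 = (2*n+2)+1 from rfl, Nat.factorial_succ, Nat.factorial_succ]
      rw [Function.iterate_succ_apply, hΔg, lemA n,
        show (2 : MvPolynomial (Fin 3) ℝ) * ((((n+1)*(2*n+3) : ℕ) : MvPolynomial (Fin 3) ℝ) * Cas0 ^ n)
          = ((2*((n+1)*(2*n+3)) : ℕ) : MvPolynomial (Fin 3) ℝ) * Cas0 ^ n by push_cast; ring,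
        hconst, ih, ← Nat.cast_mul]
      congr 1
      rw [show 2*(n+1)+1 = 2*n+3 by ring, hfac]
      ring
  constructor
  · rw [hCas0, hiter d, map_natCast (C : ℝ →+* MvPolynomial (Fin 3) ℝ),
      map_natCast (C : ℝ →+* MvPolynomial (Fin 3) ℝ), ← Nat.cast_mul]
  · have hPC : P Cas = Polynomial.C (1/2 : ℝ) * Polynomial.X ^ 2 := by
      rw [hP, hCas]
      simp [Polynomial.C_eq_algebraMap]
    have harg : Polynomial.X ^ 2 * P (Cas ^ d)
        = Polynomial.C ((1/2 : ℝ)^d) * Polynomial.X ^ (2*(d+1)) := by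
      rw [map_pow, hPC, mul_pow, ← Polynomial.C_pow, ← pow_mul]
      ring
    rw [harg, hB Δh hΔh (d+1) ((1/2:ℝ)^d), ← Polynomial.C_mul]
    congr 1
    have h2 : (2*(d+1)).factorial = (2*d+2) * (2*d+1).factorial := by
      rw [show 2*(d+1) = (2*d+1)+1 by ring, Nat.factorial_succ]
    have h3 : (d+1).factorial = (d+1) * d.factorial := Nat.factorial_succ d
    rw [h2, h3]
    push_cast
    rw [show ((1:ℝ)/2)^d = ((2:ℝ)^d)⁻¹ by rw [one_div, inv_pow]]
    have h5 : (2:ℝ)^d ≠ 0 := by positivity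
    field_simp
    ring
end

section
/- Let R = MvPolynomial (Fin 8) ℝ with variables named H₁, H₂, E₁, E₂, E₃, F₁, F₂, F₃, and let S = MvPolynomial (Fin 2) ℝ with variables named n, m. Define the sl₃ Laplacian Δ_g := 2(∂_{H₁}∘∂_{H₁} + ∂_{H₂}∘∂_{H₂} − ∂_{H₁}∘∂_{H₂} + ∂_{E₁}∘∂_{F₁} + ∂_{E₂}∘∂_{F₂} + ∂_{E₃}∘∂_{F₃}) on R, the Casimir C := (1/3)(H₁² + H₂² + H₁H₂) + E₁F₁ + E₂F₂ + E₃F₃ ∈ R, the restriction homomorphism P : R → S with P(H₁) = n, P(H₂) = m, P(Eᵢ) = P(Fᵢ) = 0, the discriminant 𝒟 := (1/2)·n·m·(n+m) ∈ S, and the Cartan Laplacian Δ_h := 2(∂_n∘∂_n + ∂_m∘∂_m − ∂_n∘∂_m) on S. Then 𝒟 · P(Δ_g(C)) = Δ_h(𝒟 · P(C)); both sides equal the polynomial 4·n·m·(n+m). -/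
open MvPolynomial

set_option maxHeartbeats 2000000 in
/-- Harish-Chandra's restriction formula verified for the quadratic Casimir of sl₃:
with variables `H₁,H₂,E₁,E₂,E₃,F₁,F₂,F₃` of `MvPolynomial (Fin 8) ℝ` (in this order),
the sl₃ Laplacian `Δ_g`, the Casimir `C`, the restriction `P` to `ℝ[n,m]`
(`= MvPolynomial (Fin 2) ℝ`), the discriminant `𝒟 = nm(n+m)/2` and the Cartan
Laplacian `Δ_h`, one has `𝒟 · P(Δ_g C) = Δ_h(𝒟 · P C)`, both sides being `4nm(n+m)`. -/
theorem sl3_harish_chandra_restriction_casimir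
    (Δg : MvPolynomial (Fin 8) ℝ → MvPolynomial (Fin 8) ℝ)
    (hΔg : ∀ q : MvPolynomial (Fin 8) ℝ,
      Δg q = 2 * (pderiv 0 (pderiv 0 q) + pderiv 1 (pderiv 1 q) - pderiv 0 (pderiv 1 q)
        + pderiv 2 (pderiv 5 q) + pderiv 3 (pderiv 6 q) + pderiv 4 (pderiv 7 q)))
    (Cas : MvPolynomial (Fin 8) ℝ)
    (hCas : Cas = C (1 / 3 : ℝ) * (X 0 ^ 2 + X 1 ^ 2 + X 0 * X 1)
        + X 2 * X 5 + X 3 * X 6 + X 4 * X 7)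
    (P : MvPolynomial (Fin 8) ℝ →ₐ[ℝ] MvPolynomial (Fin 2) ℝ)
    (hP : P = aeval ![X 0, X 1, 0, 0, 0, 0, 0, 0])
    (D : MvPolynomial (Fin 2) ℝ)
    (hD : D = C (1 / 2 : ℝ) * X 0 * X 1 * (X 0 + X 1))
    (Δh : MvPolynomial (Fin 2) ℝ → MvPolynomial (Fin 2) ℝ)
    (hΔh : ∀ q : MvPolynomial (Fin 2) ℝ,
      Δh q = 2 * (pderiv 0 (pderiv 0 q) + pderiv 1 (pderiv 1 q) - pderiv 0 (pderiv 1 q))) :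
    D * P (Δg Cas) = Δh (D * P Cas) ∧
    D * P (Δg Cas) = C (4 : ℝ) * X 0 * X 1 * (X 0 + X 1) := by
  subst hCas hP hD
  rw [hΔg, hΔh]
  constructor <;>
  · apply MvPolynomial.funext
    intro x
    simp [Matrix.cons_val_zero, Matrix.cons_val_one,
      show (2 : MvPolynomial (Fin 8) ℝ) = C 2 from (map_ofNat _ 2).symm,
      show (2 : MvPolynomial (Fin 2) ℝ) = C 2 from (map_ofNat _ 2).symm]
    ring
end
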